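/- Let A be a finite dimensional k-algebra and a(A) its universal algebra with canonical map η_A : A → A ⊗ a(A). Then for every k-algebra C and every algebra homomorphism f : A → A ⊗ C there exists a unique algebra homomorphism θ : a(A) → C such that f = (Id_A ⊗ θ) ∘ η_A. -/

import Mathlib

open TensorProduct

noncomputable section

variable (k : Type) [Field k]

/-- The relations defining the quantum symmetry semigroup `a(A)` of a finite dimensional
algebra `A` with basis `e` (with `e 0 = 1`), in terms of the structure constants
`τ i j s = e.repr (e i * e j) s`. -/
inductive ARel {A : Type} [Ring A] [Algebra k A] {n : ℕ} [NeZero n]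
    (e : Module.Basis (Fin n) k A) :
    FreeAlgebra k (Fin n × Fin n) → FreeAlgebra k (Fin n × Fin n) → Prop
  | mul (a i j : Fin n) :
      ARel e (∑ u, e.repr (e i * e j) u • FreeAlgebra.ι k (a, u))
        (∑ s, ∑ t, e.repr (e s * e t) a • (FreeAlgebra.ι k (s, i) * FreeAlgebra.ι k (t, j)))
  | unit (a : Fin n) :
      ARel e (FreeAlgebra.ι k (a, (0 : Fin n))) (if a = 0 then 1 else 0)

/-- The quantum symmetry semigroup `a(A)`. -/
abbrev aA {A : Type} [Ring A] [Algebra k A] {n : ℕ} [NeZero n] (e : Module.Basis (Fin n) k A) :=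
  RingQuot (ARel k e)

/-- The generators `x_{s i}` of `a(A)`. -/
def xg {A : Type} [Ring A] [Algebra k A] {n : ℕ} [NeZero n] (e : Module.Basis (Fin n) k A)
    (s i : Fin n) : aA k e :=
  RingQuot.mkAlgHom k (ARel k e) (FreeAlgebra.ι k (s, i))

/-- The canonical map `η_A : A → A ⊗ a(A)`, `e i ↦ ∑ s, e s ⊗ x_{s i}`, as a linear map. -/
def etaA {A : Type} [Ring A] [Algebra k A] {n : ℕ} [NeZero n] (e : Module.Basis (Fin n) k A) :
    A →ₗ[k] A ⊗[k] aA k e :=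
  (e.constr k) fun i => ∑ s, e s ⊗ₜ[k] xg k e s i


/-- Coefficient extraction from `A ⊗ C` along the basis `e`. -/
def tcoeff {A C : Type} [Ring A] [Algebra k A] [Ring C] [Algebra k C] {n : ℕ}
    (e : Module.Basis (Fin n) k A) (s : Fin n) : A ⊗[k] C →ₗ[k] C :=
  (TensorProduct.lid k C).toLinearMap ∘ₗ TensorProduct.map (e.coord s) LinearMap.id

lemma tcoeff_tmul {A C : Type} [Ring A] [Algebra k A] [Ring C] [Algebra k C] {n : ℕ}
    (e : Module.Basis (Fin n) k A) (s : Fin n) (a : A) (c : C) :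
    tcoeff k e s (a ⊗ₜ[k] c) = e.repr a s • c := by
  simp [tcoeff, Module.Basis.coord]

lemma sum_tcoeff {A C : Type} [Ring A] [Algebra k A] [Ring C] [Algebra k C] {n : ℕ}
    (e : Module.Basis (Fin n) k A) (x : A ⊗[k] C) :
    ∑ s, e s ⊗ₜ[k] tcoeff k e s x = x := by
  induction x with
  | zero => simp
  | tmul a c =>
      simp only [tcoeff_tmul]
      conv_rhs => rw [← e.sum_repr a]
      rw [TensorProduct.sum_tmul]
      refine Finset.sum_congr rfl fun s _ => ?_
      rw [TensorProduct.smul_tmul, TensorProduct.tmul_smul]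
  | add x y hx hy =>
      simp only [map_add, TensorProduct.tmul_add, Finset.sum_add_distrib, hx, hy]


/-- Universal property of `a(A)`: for every `k`-algebra `C` and every
algebra homomorphism `f : A → A ⊗ C` there exists a unique algebra homomorphism
`θ : a(A) → C` with `f = (Id_A ⊗ θ) ∘ η_A`. -/
theorem aA_universal_property {A : Type} [Ring A] [Algebra k A] {n : ℕ} [NeZero n]
    (e : Module.Basis (Fin n) k A) (he : e 0 = 1)
    (C : Type) [Ring C] [Algebra k C] (f : A →ₐ[k] A ⊗[k] C) :
    ∃! θ : aA k e →ₐ[k] C,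
      ∀ x : A, f x = Algebra.TensorProduct.map (AlgHom.id k A) θ (etaA k e x) := by
  classical
  set c : Fin n → Fin n → C := fun s i => tcoeff k e s (f (e i)) with hc
  set F : FreeAlgebra k (Fin n × Fin n) →ₐ[k] C :=
    FreeAlgebra.lift k (fun p => c p.1 p.2) with hF
  have hrel : ∀ ⦃x y⦄, ARel k e x y → F x = F y := by
    rintro x y (⟨a, i, j⟩ | a)
    · simp only [map_sum, map_smul, map_mul, hF, FreeAlgebra.lift_ι_apply]
      have lhs : ∑ u, e.repr (e i * e j) u • c a u = tcoeff k e a (f (e i * e j)) := by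
        conv_rhs => rw [← e.sum_repr (e i * e j)]
        simp only [map_sum, map_smul, hc]
      have rhs : ∑ s, ∑ t, e.repr (e s * e t) a • (c s i * c t j)
          = tcoeff k e a (f (e i) * f (e j)) := by
        conv_rhs => rw [← sum_tcoeff k e (f (e i)), ← sum_tcoeff k e (f (e j))]
        rw [Finset.sum_mul_sum]
        simp [Algebra.TensorProduct.tmul_mul_tmul, tcoeff_tmul, hc]
      rw [lhs, rhs, map_mul]
    · simp only [hF, FreeAlgebra.lift_ι_apply]
      have h1 : (1 : A ⊗[k] C) = e 0 ⊗ₜ[k] 1 := by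
        rw [he, Algebra.TensorProduct.one_def]
      have : c a 0 = tcoeff k e a (1 : A ⊗[k] C) := by
        show tcoeff k e a (f (e 0)) = _
        rw [he, map_one]
      rw [this, h1, tcoeff_tmul, Module.Basis.repr_self]
      rcases eq_or_ne a 0 with rfl | ha
      · simp
      · simp [Finsupp.single_apply, Ne.symm ha, ha]
  refine ⟨RingQuot.liftAlgHom k ⟨F, hrel⟩, ?_, ?_⟩
  · set θ := RingQuot.liftAlgHom k ⟨F, hrel⟩ with hθ
    have key : ∀ s i, θ (xg k e s i) = c s i := fun s i => by
      rw [hθ, xg, RingQuot.liftAlgHom_mkAlgHom_apply, hF, FreeAlgebra.lift_ι_apply]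
    have hlin : f.toLinearMap =
        (Algebra.TensorProduct.map (AlgHom.id k A) θ).toLinearMap ∘ₗ etaA k e := by
      apply e.ext
      intro i
      simp only [AlgHom.toLinearMap_apply, LinearMap.comp_apply, etaA, Module.Basis.constr_basis,
        map_sum, Algebra.TensorProduct.map_tmul, AlgHom.coe_id, id_eq, key]
      exact (sum_tcoeff k e (f (e i))).symm
    intro x
    exact congrFun (congrArg (fun g => g.toFun) hlin) x
  · intro θ' hθ'
    have key' : ∀ s i, θ' (xg k e s i) = c s i := by
      intro s i
      have h := hθ' (e i)
      simp only [etaA, Module.Basis.constr_basis, map_sum, Algebra.TensorProduct.map_tmul,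
        AlgHom.coe_id, id_eq] at h
      have := congrArg (tcoeff k e s) h
      simp only [map_sum, tcoeff_tmul, Module.Basis.repr_self, Finsupp.single_apply, ite_smul,
        one_smul, zero_smul, Finset.sum_ite_eq', Finset.mem_univ, if_true] at this
      exact this.symm
    apply RingQuot.ringQuot_ext'
    apply FreeAlgebra.hom_ext
    funext p
    simp only [Function.comp_apply, AlgHom.coe_comp]
    have := key' p.1 p.2
    rw [xg] at this
    rw [this, RingQuot.liftAlgHom_mkAlgHom_apply, hF, FreeAlgebra.lift_ι_apply]

end
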